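/- Let d ≥ 1, n ≥ 2, Σ a positive definite d×d real matrix, μ, z* ∈ ℝ^d, and τ ≥ 1. Let m₀ = ((τ−1)/τ)μ̂_{τ−1} + μ/τ with covariance V₀ = Σ/(τ²n), and m₁ = ((τ−1)/τ)μ̂_{τ−1} + ((n−1)μ + z*)/(τn) with covariance V₁ = ((n−1)/n²τ²)Σ. Then the log ratio of the multivariate Gaussian density N(m₁, V₁) to N(m₀, V₀) evaluated at μ̂_τ equals −(d/2)log((n−1)/n) − (n/(2(n−1)))·Nᵀ Σ⁻¹ N + (n/(n−1))·Nᵀ Σ⁻¹ (z* − μ) − m*/(2(n−1)), where N = τ(μ̂_τ − ((τ−1)/τ)μ̂_{τ−1}) − μ and m* = (z*−μ)ᵀ Σ⁻¹ (z*−μ). -/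

import Mathlib

open Real Matrix

/-- Multivariate Gaussian density with mean `m` and covariance `V`. -/
noncomputable def mvGaussPDF {d : ℕ} (m : Fin d → ℝ) (V : Matrix (Fin d) (Fin d) ℝ)
    (x : Fin d → ℝ) : ℝ :=
  (2 * Real.pi) ^ (-(d : ℝ) / 2) * V.det ^ (-(1 : ℝ) / 2) *
    Real.exp (-((x - m) ⬝ᵥ (V⁻¹ *ᵥ (x - m))) / 2)

/-! Both covariances are multiples `c₀ Σ`, `c₁ Σ` of `Σ`, so the normalising constants contribute
only `-(d/2) log(c₁/c₀)`, and `c₁/c₀ = (n-1)/n`. The residuals are `μ̂_τ - m₀ = N/τ` and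
`μ̂_τ - m₁ = (n N - (z* - μ))/(τ n)`; expanding the second quadratic form, using that `Σ⁻¹` is
symmetric, and subtracting the first gives the formula. -/

lemma Matrix.IsSymm.dotProduct_mulVec_sub_sub {ι R : Type*} [Fintype ι] [CommRing R]
    {S : Matrix ι ι R} (hS : S.IsSymm) (u v : ι → R) :
    (u - v) ⬝ᵥ (S *ᵥ (u - v)) = u ⬝ᵥ (S *ᵥ u) - 2 * u ⬝ᵥ (S *ᵥ v) + v ⬝ᵥ (S *ᵥ v) := by
  have hswap : v ⬝ᵥ (S *ᵥ u) = u ⬝ᵥ (S *ᵥ v) := by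
    rw [dotProduct_mulVec, ← mulVec_transpose, hS.eq, dotProduct_comm]
  simp only [mulVec_sub, dotProduct_sub, sub_dotProduct, hswap]
  ring

lemma Matrix.inv_smul_of_ne_zero {ι K : Type*} [Fintype ι] [DecidableEq ι] [Field K]
    (A : Matrix ι ι K) (hA : A.det ≠ 0) {c : K} (hc : c ≠ 0) : (c • A)⁻¹ = c⁻¹ • A⁻¹ :=
  inv_smul' A (Units.mk0 c hc) (isUnit_iff_ne_zero.mpr hA)

lemma log_mvGaussPDF {d : ℕ} (m : Fin d → ℝ) {V : Matrix (Fin d) (Fin d) ℝ} (hV : 0 < V.det)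
    (x : Fin d → ℝ) :
    Real.log (mvGaussPDF m V x)
      = -((d : ℝ) / 2) * Real.log (2 * π) - Real.log V.det / 2
        - (x - m) ⬝ᵥ (V⁻¹ *ᵥ (x - m)) / 2 := by
  have h2π : 0 < 2 * π := by positivity
  rw [mvGaussPDF, Real.log_mul (by positivity) (Real.exp_ne_zero _),
    Real.log_mul (by positivity) (by positivity), Real.log_rpow h2π, Real.log_rpow hV,
    Real.log_exp]
  ring

lemma mvGaussPDF_pos {d : ℕ} (m : Fin d → ℝ) {V : Matrix (Fin d) (Fin d) ℝ} (hV : 0 < V.det)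
    (x : Fin d → ℝ) : 0 < mvGaussPDF m V x := by
  unfold mvGaussPDF
  positivity

lemma log_mvGaussPDF_smul_div_smul {d : ℕ} {S : Matrix (Fin d) (Fin d) ℝ} (hS : 0 < S.det)
    {c₀ c₁ : ℝ} (hc₀ : 0 < c₀) (hc₁ : 0 < c₁) (m₀ m₁ x : Fin d → ℝ) :
    Real.log (mvGaussPDF m₁ (c₁ • S) x / mvGaussPDF m₀ (c₀ • S) x)
      = -((d : ℝ) / 2) * Real.log (c₁ / c₀)
        - (x - m₁) ⬝ᵥ (S⁻¹ *ᵥ (x - m₁)) / (2 * c₁)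
        + (x - m₀) ⬝ᵥ (S⁻¹ *ᵥ (x - m₀)) / (2 * c₀) := by
  have det_smul_eq : ∀ c : ℝ, (c • S).det = c ^ d * S.det := fun c => by
    rw [det_smul, Fintype.card_fin]
  have hdet₀ : 0 < (c₀ • S).det := by rw [det_smul_eq]; positivity
  have hdet₁ : 0 < (c₁ • S).det := by rw [det_smul_eq]; positivity
  rw [Real.log_div (mvGaussPDF_pos _ hdet₁ _).ne' (mvGaussPDF_pos _ hdet₀ _).ne',
    log_mvGaussPDF _ hdet₁, log_mvGaussPDF _ hdet₀, det_smul_eq, det_smul_eq,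
    inv_smul_of_ne_zero S hS.ne' hc₀.ne', inv_smul_of_ne_zero S hS.ne' hc₁.ne',
    Real.log_mul (by positivity) hS.ne', Real.log_mul (by positivity) hS.ne',
    Real.log_pow, Real.log_pow, Real.log_div hc₁.ne' hc₀.ne']
  simp only [smul_mulVec, dotProduct_smul, smul_eq_mul]
  field_simp
  ring

theorem semi_star_multivariate_log_lr_general
    (d n τ : ℕ) (hn : 2 ≤ n) (hτ : 1 ≤ τ)
    (Sig : Matrix (Fin d) (Fin d) ℝ) (hSig : Sig.PosDef)
    (μ zstar μhatPrev μhatτ : Fin d → ℝ)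
    (m₀ m₁ N : Fin d → ℝ) (V₀ V₁ : Matrix (Fin d) (Fin d) ℝ) (mstar : ℝ)
    (hm₀ : m₀ = (((τ : ℝ) - 1) / τ) • μhatPrev + (τ : ℝ)⁻¹ • μ)
    (hV₀ : V₀ = ((τ : ℝ) ^ 2 * n)⁻¹ • Sig)
    (hm₁ : m₁ = (((τ : ℝ) - 1) / τ) • μhatPrev
        + ((τ : ℝ) * n)⁻¹ • (((n : ℝ) - 1) • μ + zstar))
    (hV₁ : V₁ = (((n : ℝ) - 1) / ((n : ℝ) ^ 2 * (τ : ℝ) ^ 2)) • Sig)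
    (hN : N = (τ : ℝ) • (μhatτ - (((τ : ℝ) - 1) / τ) • μhatPrev) - μ)
    (hmstar : mstar = (zstar - μ) ⬝ᵥ (Sig⁻¹ *ᵥ (zstar - μ))) :
    Real.log (mvGaussPDF m₁ V₁ μhatτ / mvGaussPDF m₀ V₀ μhatτ)
      = -((d : ℝ) / 2) * Real.log (((n : ℝ) - 1) / n)
        - ((n : ℝ) / (2 * ((n : ℝ) - 1))) * (N ⬝ᵥ (Sig⁻¹ *ᵥ N))
        + ((n : ℝ) / ((n : ℝ) - 1)) * (N ⬝ᵥ (Sig⁻¹ *ᵥ (zstar - μ)))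
        - mstar / (2 * ((n : ℝ) - 1)) := by
  have hτ₀ : (0 : ℝ) < τ := by exact_mod_cast hτ
  have hn₁ : (0 : ℝ) < n - 1 := by
    have : (2 : ℝ) ≤ n := by exact_mod_cast hn
    linarith
  have hn₀ : (0 : ℝ) < n := by linarith
  have hres₀ : μhatτ - m₀ = (τ : ℝ)⁻¹ • N := by
    ext i
    simp only [hm₀, hN, Pi.sub_apply, Pi.add_apply, Pi.smul_apply, smul_eq_mul]
    field_simp
    ring
  have hres₁ : μhatτ - m₁ = ((τ : ℝ) * n)⁻¹ • ((n : ℝ) • N - (zstar - μ)) := by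
    ext i
    simp only [hm₁, hN, Pi.sub_apply, Pi.add_apply, Pi.smul_apply, smul_eq_mul]
    field_simp
    ring
  have hratio : ((n : ℝ) - 1) / (n ^ 2 * τ ^ 2) / ((τ : ℝ) ^ 2 * n)⁻¹ = (n - 1) / n := by
    field_simp
  have hSymm : Sig⁻¹.IsSymm := (isHermitian_iff_isSymm.mp hSig.isHermitian).inv
  rw [hV₀, hV₁, log_mvGaussPDF_smul_div_smul hSig.det_pos (by positivity) (by positivity),
    hratio, hres₀, hres₁]
  -- keeps `hSymm.dotProduct_mulVec_sub_sub` from also expanding the quadratic form `mstar`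
  set w := zstar - μ
  simp only [mulVec_smul, dotProduct_smul, smul_dotProduct, smul_eq_mul,
    hSymm.dotProduct_mulVec_sub_sub, ← hmstar]
  field_simp
  ring

/-- Multivariate log likelihood ratio of SeMI* (Theorem 3.1). -/
theorem semi_star_multivariate_log_lr
    (d n τ : ℕ) (hd : 1 ≤ d) (hn : 2 ≤ n) (hτ : 1 ≤ τ)
    (Sig : Matrix (Fin d) (Fin d) ℝ) (hSig : Sig.PosDef)
    (μ zstar μhatPrev μhatτ : Fin d → ℝ)
    (m₀ m₁ N : Fin d → ℝ) (V₀ V₁ : Matrix (Fin d) (Fin d) ℝ) (mstar : ℝ)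
    (hm₀ : m₀ = (((τ : ℝ) - 1) / τ) • μhatPrev + (τ : ℝ)⁻¹ • μ)
    (hV₀ : V₀ = ((τ : ℝ) ^ 2 * n)⁻¹ • Sig)
    (hm₁ : m₁ = (((τ : ℝ) - 1) / τ) • μhatPrev
        + ((τ : ℝ) * n)⁻¹ • (((n : ℝ) - 1) • μ + zstar))
    (hV₁ : V₁ = (((n : ℝ) - 1) / ((n : ℝ) ^ 2 * (τ : ℝ) ^ 2)) • Sig)
    (hN : N = (τ : ℝ) • (μhatτ - (((τ : ℝ) - 1) / τ) • μhatPrev) - μ)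
    (hmstar : mstar = (zstar - μ) ⬝ᵥ (Sig⁻¹ *ᵥ (zstar - μ))) :
    Real.log (mvGaussPDF m₁ V₁ μhatτ / mvGaussPDF m₀ V₀ μhatτ)
      = -((d : ℝ) / 2) * Real.log (((n : ℝ) - 1) / n)
        - ((n : ℝ) / (2 * ((n : ℝ) - 1))) * (N ⬝ᵥ (Sig⁻¹ *ᵥ N))
        + ((n : ℝ) / ((n : ℝ) - 1)) * (N ⬝ᵥ (Sig⁻¹ *ᵥ (zstar - μ)))
        - mstar / (2 * ((n : ℝ) - 1)) :=
  semi_star_multivariate_log_lr_general d n τ hn hτ Sig hSig μ zstar μhatPrev μhatτ m₀ m₁ N V₀ V₁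
    mstar hm₀ hV₀ hm₁ hV₁ hN hmstar
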